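/- Let a = {a_j} be a positive, decreasing, summable sequence and let D_a ∈ 𝒞_a be the decreasing complementary set. Then dim_A D_a is either 0 or 1. Moreover, dim_A D_a = 0 if and only if there is some ε > 0 such that a_j ≥ ε Σ_{i=j+1}^∞ a_i for all j. -/

import Mathlib

open scoped BigOperators
open Set

/-- `coverNum r F` is the minimal number of closed balls of radius `r`
needed to cover `F`. -/
noncomputable def coverNum (r : ℝ) (F : Set ℝ) : ℕ :=
  sInf {n : ℕ | ∃ S : Finset ℝ, S.card = n ∧ F ⊆ ⋃ x ∈ S, Metric.closedBall x r}

/-- The Assouad dimension of a set `F ⊆ ℝ`. -/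
noncomputable def dimA (F : Set ℝ) : ℝ :=
  sInf {α : ℝ | ∃ c > (0 : ℝ), ∃ ρ > (0 : ℝ), ∀ x ∈ F, ∀ r R : ℝ,
    0 < r → r < R → R < ρ →
    (coverNum r (Metric.closedBall x R ∩ F) : ℝ) ≤ c * (R / r) ^ α}

/-- The Lower Assouad dimension of a set `F ⊆ ℝ`. -/
noncomputable def dimL (F : Set ℝ) : ℝ :=
  sSup {α : ℝ | ∃ c > (0 : ℝ), ∃ ρ > (0 : ℝ), ∀ x ∈ F, ∀ r R : ℝ,
    0 < r → r < R → R < ρ →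
    c * (R / r) ^ α ≤ (coverNum r (Metric.closedBall x R ∩ F) : ℝ)}

/-- `E` is a complementary set of the (positive, summable) sequence `a`,
i.e. `E ∈ 𝒞_a`:  `E = [0, L] \ ⋃ U n` where the `U n` are disjoint open
intervals in `[0, L]` with `U n` of length `a n`, and `L = ∑ a`. -/
def IsComplementarySet (a : ℕ → ℝ) (E : Set ℝ) : Prop :=
  ∃ U : ℕ → Set ℝ,
    (∀ n, ∃ p q : ℝ, p < q ∧ q - p = a n ∧ U n = Set.Ioo p q) ∧
    (∀ n, U n ⊆ Set.Icc 0 (∑' i, a i)) ∧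
    Pairwise (Function.onFun Disjoint U) ∧
    E = Set.Icc 0 (∑' i, a i) \ ⋃ n, U n

/-- The decreasing complementary set `D_a = {∑_{i ≥ k} a i : k} ∪ {0}`,
obtained by placing the gaps in order from right to left starting at `L`. -/
noncomputable def decSet (a : ℕ → ℝ) : Set ℝ :=
  {0} ∪ {x : ℝ | ∃ k : ℕ, x = ∑' i : ℕ, a (k + i)}

/-- Length of the `j`-th closed interval (0-indexed, `j < 2 ^ k`) at step `k`
of the construction of the Cantor set associated to the gap sequence `a`:
it is the total length of all the gaps to be removed from that interval. -/
noncomputable def cantorLen (a : ℕ → ℝ) (k j : ℕ) : ℝ :=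
  ∑' m : ℕ, ∑ i ∈ Finset.range (2 ^ m), a (2 ^ (k + m) - 1 + 2 ^ m * j + i)

/-- Left endpoint of the `j`-th closed interval (0-indexed, `j < 2 ^ k`) at
step `k` of the construction of the Cantor set associated to `a`:  removing
from each step-`k` interval `I_j^k` the open gap of length `a (2 ^ k - 1 + j)`
produces the two step-`(k+1)` intervals `I_{2j}^{k+1}` and `I_{2j+1}^{k+1}`. -/
noncomputable def cantorLeft (a : ℕ → ℝ) : ℕ → ℕ → ℝ
  | 0, _ => 0
  | k + 1, j =>
    if j % 2 = 0 then cantorLeft a k (j / 2)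
    else cantorLeft a k (j / 2) + cantorLen a (k + 1) (j - 1) + a (2 ^ k - 1 + j / 2)

/-- The Cantor set `C_a` associated to the gap sequence `a`. -/
noncomputable def assocCantor (a : ℕ → ℝ) : Set ℝ :=
  ⋂ k : ℕ, ⋃ j ∈ Finset.range (2 ^ k),
    Set.Icc (cantorLeft a k j) (cantorLeft a k j + cantorLen a k j)

/-- `avgLen a n = s_n^{(a)} = 2 ^ (-n) ∑_{j ≥ 2 ^ n - 1} a j`, the average length of
the step-`n` intervals of `C_a` (with `a` 0-indexed, so this matches
`2^{-n} Σ_{j=2^n}^∞ a_j` for the 1-indexed sequence of the paper). -/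
noncomputable def avgLen (a : ℕ → ℝ) (n : ℕ) : ℝ :=
  (∑' j : ℕ, a (2 ^ n - 1 + j)) / 2 ^ n

/-- The gap sequence of the central Cantor set with ratio sequence `r`
(0-indexed): the gap `a i` has length `r 0 ⋯ r (n-1) * (1 - 2 * r n)` where
`2 ^ n - 1 ≤ i ≤ 2 ^ (n+1) - 2`, i.e. `n = log₂ (i + 1)`.  The central Cantor
set `C{r_j}` itself is `assocCantor (centralGaps r)`. -/
noncomputable def centralGaps (r : ℕ → ℝ) (i : ℕ) : ℝ :=
  (∏ j ∈ Finset.range (Nat.log 2 (i + 1)), r j) * (1 - 2 * r (Nat.log 2 (i + 1)))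

/-- A decreasing sequence `a` is doubling if `a n ≤ τ * a (2 * n)` (1-indexed)
for some constant `τ`; with 0-indexing this reads `a n ≤ τ * a (2 * n + 1)`. -/
def IsDoubling (a : ℕ → ℝ) : Prop :=
  ∃ τ : ℝ, ∀ n : ℕ, a n ≤ τ * a (2 * n + 1)

/-- A general sequence is doubling if its decreasing rearrangement is. -/
def IsDoublingGen (a : ℕ → ℝ) : Prop :=
  ∃ σ : Equiv.Perm ℕ, Antitone (a ∘ σ) ∧ IsDoubling (a ∘ σ)

/-!
`D_a` consists of `0` and the tails `T k = ∑_{i ≥ k} a i`, and `T k - T (k + 1) = a k`.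
If `a` is lacunary the tails decay geometrically, `(1 + ε) ^ n T (k + n) ≤ T k`, so a ball
`B(x, R)` contains only `O(log (R / r))` tails exceeding `2 r`, while all smaller tails lie in
one ball of radius `r`; hence every `α > 0` is an Assouad exponent of `D_a`.
If `a` is not lacunary there are arbitrarily late `j` with `a j < ε T (j + 1)`; since `a` is
decreasing, `D_a` is `a j`-dense in `[0, T (j + 1)]`, so covering `B(0, T (j + 1)) ∩ D_a` by
balls of radius `a j` takes at least `T (j + 1) / (4 a j) > 1 / (4 ε)` of them, which rules
out every exponent below `1`.
-/

open Filter Topology Metric Bornology MeasureTheory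

section Covering

variable {F : Set ℝ} {r : ℝ}

lemma coverNum_le_card {S : Finset ℝ} (h : F ⊆ ⋃ y ∈ S, closedBall y r) :
    coverNum r F ≤ S.card :=
  Nat.sInf_le ⟨S, rfl, h⟩

lemma exists_finset_Icc_subset_biUnion_closedBall (hr : 0 < r) {u v : ℝ} (huv : u ≤ v) :
    ∃ S : Finset ℝ, (S.card : ℝ) ≤ (v - u) / (2 * r) + 1 ∧
      Icc u v ⊆ ⋃ y ∈ S, closedBall y r := by
  set N : ℕ := ⌊(v - u) / (2 * r)⌋₊ + 1
  refine ⟨(Finset.range N).image fun i : ℕ => u + (2 * i + 1) * r, ?_, ?_⟩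
  · calc ((Finset.range N).image fun i : ℕ => u + (2 * i + 1) * r).card
        ≤ ((Finset.range N).card : ℝ) := by exact_mod_cast Finset.card_image_le
      _ ≤ (v - u) / (2 * r) + 1 := by
        simpa [N] using Nat.floor_le (div_nonneg (sub_nonneg.mpr huv) (by positivity))
  · rintro z ⟨hzu, hzv⟩
    have h2r : 0 < 2 * r := by positivity
    set i : ℕ := ⌊(z - u) / (2 * r)⌋₊
    have hi : (i : ℝ) * (2 * r) ≤ z - u :=
      (le_div_iff₀ h2r).mp (Nat.floor_le (div_nonneg (sub_nonneg.mpr hzu) h2r.le))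
    have hi' : z - u < (i + 1) * (2 * r) := (div_lt_iff₀ h2r).mp (Nat.lt_floor_add_one _)
    have hiN : i < N := Nat.lt_succ_of_le (Nat.floor_le_floor (by gcongr))
    refine Set.mem_iUnion₂.mpr
      ⟨u + (2 * i + 1) * r, Finset.mem_image_of_mem _ (Finset.mem_range.mpr hiN), ?_⟩
    rw [Real.closedBall_eq_Icc]
    constructor <;> nlinarith

lemma exists_finset_card_eq_coverNum (hF : IsBounded F) (hr : 0 < r) :
    ∃ S : Finset ℝ, S.card = coverNum r F ∧ F ⊆ ⋃ y ∈ S, closedBall y r := by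
  obtain ⟨R, hR, hFR⟩ := hF.subset_closedBall_lt 0 0
  obtain ⟨S, -, hS⟩ :=
    exists_finset_Icc_subset_biUnion_closedBall hr (by linarith : 0 - R ≤ 0 + R)
  have hcov : F ⊆ ⋃ y ∈ S, closedBall y r := hFR.trans (Real.closedBall_eq_Icc ▸ hS)
  exact Nat.sInf_mem
    (s := {n | ∃ S : Finset ℝ, S.card = n ∧ F ⊆ ⋃ y ∈ S, closedBall y r})
    ⟨_, S, rfl, hcov⟩

lemma one_le_coverNum (hF : IsBounded F) (hne : F.Nonempty) (hr : 0 < r) : 1 ≤ coverNum r F := by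
  obtain ⟨S, hS, hcov⟩ := exists_finset_card_eq_coverNum hF hr
  obtain ⟨x, hx⟩ := hne
  obtain ⟨y, hy, -⟩ := mem_iUnion₂.mp (hcov hx)
  exact hS ▸ Finset.card_pos.mpr ⟨y, hy⟩

/-- The doubled balls of an optimal cover of `F` cover `[u, v]`; compare lengths. -/
lemma sub_le_coverNum_mul (hF : IsBounded F) (hr : 0 < r) {u v : ℝ}
    (hdense : ∀ z ∈ Icc u v, ∃ p ∈ F, dist z p ≤ r) :
    v - u ≤ coverNum r F * (4 * r) := by
  obtain ⟨S, hS, hcov⟩ := exists_finset_card_eq_coverNum hF hr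
  have hsub : Icc u v ⊆ ⋃ y ∈ S, closedBall y (2 * r) := by
    intro z hz
    obtain ⟨p, hp, hzp⟩ := hdense z hz
    obtain ⟨y, hy, hpy⟩ := mem_iUnion₂.mp (hcov hp)
    rw [mem_closedBall] at hpy
    exact Set.mem_iUnion₂.mpr ⟨y, hy, mem_closedBall.mpr (by linarith [dist_triangle z p y])⟩
  calc v - u ≤ volume.real (Icc u v) := by simp
    _ ≤ volume.real (⋃ y ∈ S, closedBall y (2 * r)) := measureReal_mono hsub
        (measure_biUnion_lt_top S.finite_toSet fun y _ => measure_closedBall_lt_top).ne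
    _ ≤ ∑ y ∈ S, volume.real (closedBall y (2 * r)) := measureReal_biUnion_finset_le _ _
    _ = coverNum r F * (4 * r) := by
        rw [Finset.sum_congr rfl fun y _ => Real.volume_real_closedBall (by positivity),
          Finset.sum_const, nsmul_eq_mul, hS]
        ring

end Covering

section AssouadDimension

variable {F : Set ℝ}

/-- `dimA F` is by definition the infimum of this set. -/
def assouadExponents (F : Set ℝ) : Set ℝ :=
  {α : ℝ | ∃ c > (0 : ℝ), ∃ ρ > (0 : ℝ), ∀ x ∈ F, ∀ r R : ℝ,
    0 < r → r < R → R < ρ →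
    (coverNum r (closedBall x R ∩ F) : ℝ) ≤ c * (R / r) ^ α}

lemma one_mem_assouadExponents (F : Set ℝ) : 1 ∈ assouadExponents F := by
  refine ⟨2, two_pos, 1, one_pos, fun x _ r R hr hrR _ => ?_⟩
  obtain ⟨S, hcard, hcov⟩ :=
    exists_finset_Icc_subset_biUnion_closedBall hr (by linarith : x - R ≤ x + R)
  have hball : closedBall x R ∩ F ⊆ ⋃ y ∈ S, closedBall y r :=
    inter_subset_left.trans (Real.closedBall_eq_Icc ▸ hcov)
  have ht : 1 < R / r := (one_lt_div hr).mpr hrR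
  calc (coverNum r (closedBall x R ∩ F) : ℝ) ≤ S.card := by
        exact_mod_cast coverNum_le_card hball
    _ ≤ (x + R - (x - R)) / (2 * r) + 1 := hcard
    _ = R / r + 1 := by field_simp; ring
    _ ≤ 2 * (R / r) ^ (1 : ℝ) := by rw [Real.rpow_one]; linarith

lemma le_of_frequently_rpow_le {α β C : ℝ} (h : ∃ᶠ t in atTop, t ^ β ≤ C * t ^ α) :
    β ≤ α := by
  by_contra! hαβ
  have hgrow := (tendsto_rpow_atTop (sub_pos.mpr hαβ)).eventually_gt_atTop C
  obtain ⟨t, hle, ht, hC⟩ := (h.and_eventually ((eventually_gt_atTop 0).and hgrow)).exists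
  have hsplit : t ^ β = t ^ (β - α) * t ^ α := by rw [← Real.rpow_add ht, sub_add_cancel]
  nlinarith [Real.rpow_pos_of_pos ht α]

lemma nonneg_of_mem_assouadExponents (hF : F.Nonempty) {α : ℝ}
    (hα : α ∈ assouadExponents F) : 0 ≤ α := by
  obtain ⟨c, -, ρ, hρ, H⟩ := hα
  obtain ⟨x, hx⟩ := hF
  refine le_of_frequently_rpow_le (C := c) (frequently_atTop.mpr fun t₀ => ?_)
  set t := max t₀ 2
  have ht : 1 < t := by linarith [le_max_right t₀ 2]
  have hR : 0 < ρ / 2 := half_pos hρ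
  have hr : 0 < ρ / 2 / t := by positivity
  refine ⟨t, le_max_left t₀ 2, ?_⟩
  have hne : (closedBall x (ρ / 2) ∩ F).Nonempty := ⟨x, mem_closedBall_self hR.le, hx⟩
  calc t ^ (0 : ℝ) = 1 := Real.rpow_zero t
    _ ≤ coverNum (ρ / 2 / t) (closedBall x (ρ / 2) ∩ F) := by
      exact_mod_cast one_le_coverNum (isBounded_closedBall.subset inter_subset_left) hne hr
    _ ≤ c * (ρ / 2 / (ρ / 2 / t)) ^ α := H x hx _ _ hr (div_lt_self hR ht) (half_lt_self hρ)
    _ = c * t ^ α := by rw [div_div_cancel₀ hR.ne']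

lemma dimA_eq_one_of_forall_one_le (h : ∀ α ∈ assouadExponents F, 1 ≤ α) : dimA F = 1 :=
  le_antisymm (csInf_le ⟨1, h⟩ (one_mem_assouadExponents F))
    (le_csInf ⟨1, one_mem_assouadExponents F⟩ h)

lemma dimA_eq_zero_of_forall_pos_mem (hF : F.Nonempty)
    (h : ∀ α, 0 < α → α ∈ assouadExponents F) : dimA F = 0 := by
  have hnonneg : ∀ α ∈ assouadExponents F, 0 ≤ α :=
    fun _ => nonneg_of_mem_assouadExponents hF
  refine le_antisymm (le_of_forall_pos_le_add fun ε hε => ?_)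
    (le_csInf ⟨1, one_mem_assouadExponents F⟩ hnonneg)
  rw [zero_add]
  exact csInf_le ⟨0, hnonneg⟩ (h ε hε)

end AssouadDimension

lemma card_le_log_div_log_add_one {T : ℕ → ℝ} {q C : ℝ} (hq : 1 < q)
    (hT : ∀ k n, q ^ n * T (k + n) ≤ T k) (hTpos : ∀ k, 0 < T k) (hC : 1 ≤ C)
    {K : Finset ℕ} (hK : ∀ k ∈ K, ∀ k' ∈ K, T k ≤ C * T k') :
    (K.card : ℝ) ≤ Real.log C / Real.log q + 1 := by
  have hlogq : 0 < Real.log q := Real.log_pos hq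
  rcases K.eq_empty_or_nonempty with rfl | hne
  · simp only [Finset.card_empty, Nat.cast_zero]
    linarith [div_nonneg (Real.log_nonneg hC) hlogq.le]
  set m := K.min' hne
  set M := K.max' hne
  have hmM : m ≤ M := K.min'_le_max' hne
  have hcard : K.card ≤ M - m + 1 := by
    calc K.card ≤ (Finset.Icc m M).card :=
          Finset.card_le_card fun k hk => Finset.mem_Icc.mpr ⟨K.min'_le k hk, K.le_max' k hk⟩
      _ = M - m + 1 := by rw [Nat.card_Icc]; omega
  have hpow : q ^ (M - m) ≤ C := by
    refine le_of_mul_le_mul_right ?_ (hTpos M)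
    calc q ^ (M - m) * T M = q ^ (M - m) * T (m + (M - m)) := by rw [Nat.add_sub_cancel' hmM]
      _ ≤ T m := hT m (M - m)
      _ ≤ C * T M := hK m (K.min'_mem hne) M (K.max'_mem hne)
  have hlog : ((M - m : ℕ) : ℝ) ≤ Real.log C / Real.log q := by
    rw [le_div_iff₀ hlogq]
    exact (Real.pow_le_iff_le_log (by linarith) (by linarith)).mp hpow
  calc (K.card : ℝ) ≤ ((M - m : ℕ) : ℝ) + 1 := by exact_mod_cast hcard
    _ ≤ Real.log C / Real.log q + 1 := by linarith

lemma exists_succ_lt_le_of_tendsto_zero {f : ℕ → ℝ} (hf : Tendsto f atTop (𝓝 0)) {z : ℝ}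
    (hz : 0 < z) {n : ℕ} (hzn : z ≤ f n) : ∃ k ≥ n, f (k + 1) < z ∧ z ≤ f k := by
  classical
  obtain ⟨N, hN⟩ := eventually_atTop.mp (hf.eventually (eventually_lt_nhds hz))
  have hex : ∃ k, n ≤ k ∧ f (k + 1) < z := ⟨max n N, le_max_left n N, hN _ (by omega)⟩
  obtain ⟨hnk, hlt⟩ := Nat.find_spec hex
  refine ⟨Nat.find hex, hnk, hlt, ?_⟩
  rcases hnk.eq_or_lt with h | h
  · rwa [← h]
  · obtain ⟨k, hk⟩ : ∃ k, Nat.find hex = k + 1 := ⟨Nat.find hex - 1, by omega⟩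
    have hmin := Nat.find_min hex (show k < Nat.find hex by omega)
    push Not at hmin
    rw [hk]
    exact hmin (by omega)

section Tails

variable {a : ℕ → ℝ}

noncomputable def tailSum (a : ℕ → ℝ) (k : ℕ) : ℝ := ∑' i, a (k + i)

lemma tailSum_eq_add (hsum : Summable a) (k : ℕ) : tailSum a k = a k + tailSum a (k + 1) := by
  have hk : Summable fun i => a (k + i) := by
    simpa only [add_comm] using (summable_nat_add_iff k).mpr hsum
  rw [tailSum, tailSum, hk.tsum_eq_zero_add, add_zero]
  exact congrArg _ (tsum_congr fun i => congrArg a (by omega))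

lemma tailSum_nonneg (hpos : ∀ n, 0 < a n) (k : ℕ) : 0 ≤ tailSum a k :=
  tsum_nonneg fun i => (hpos (k + i)).le

lemma tailSum_pos (hpos : ∀ n, 0 < a n) (hsum : Summable a) (k : ℕ) : 0 < tailSum a k := by
  rw [tailSum_eq_add hsum]
  linarith [hpos k, tailSum_nonneg hpos (k + 1)]

lemma tailSum_antitone (hpos : ∀ n, 0 < a n) (hsum : Summable a) : Antitone (tailSum a) :=
  antitone_nat_of_succ_le fun k => by linarith [tailSum_eq_add hsum k, hpos k]

lemma tendsto_tailSum (a : ℕ → ℝ) : Tendsto (tailSum a) atTop (𝓝 0) :=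
  (tendsto_sum_nat_add a).congr fun k => tsum_congr fun i => congrArg a (add_comm i k)

end Tails

section Lacunary

variable {a : ℕ → ℝ}

def IsLacunary (a : ℕ → ℝ) : Prop :=
  ∃ ε : ℝ, 0 < ε ∧ ∀ j : ℕ, ε * tailSum a (j + 1) ≤ a j

lemma IsLacunary.of_forall_ge (hpos : ∀ n, 0 < a n) (hsum : Summable a) (J : ℕ)
    (h : ∃ ε : ℝ, 0 < ε ∧ ∀ j ≥ J, ε * tailSum a (j + 1) ≤ a j) : IsLacunary a := by
  induction J with
  | zero =>
    obtain ⟨ε, hε, h⟩ := h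
    exact ⟨ε, hε, fun j => h j j.zero_le⟩
  | succ J ih =>
    obtain ⟨ε, hε, h⟩ := h
    have hT : 0 < tailSum a (J + 1) := tailSum_pos hpos hsum _
    refine ih ⟨min ε (a J / tailSum a (J + 1)), lt_min hε (div_pos (hpos J) hT),
      fun j hj => ?_⟩
    rcases hj.eq_or_lt with rfl | hj
    · calc min ε (a J / tailSum a (J + 1)) * tailSum a (J + 1)
          ≤ a J / tailSum a (J + 1) * tailSum a (J + 1) := by gcongr; exact min_le_right _ _
        _ = a J := div_mul_cancel₀ _ hT.ne'
    · calc min ε (a J / tailSum a (J + 1)) * tailSum a (j + 1)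
          ≤ ε * tailSum a (j + 1) := by
            gcongr
            · exact tailSum_nonneg hpos _
            · exact min_le_left _ _
        _ ≤ a j := h j hj

lemma pow_mul_tailSum_le (hsum : Summable a) {ε : ℝ} (hε : 0 ≤ ε)
    (hlac : ∀ j, ε * tailSum a (j + 1) ≤ a j) (k n : ℕ) :
    (1 + ε) ^ n * tailSum a (k + n) ≤ tailSum a k := by
  induction n with
  | zero => simp
  | succ n ih =>
    calc (1 + ε) ^ (n + 1) * tailSum a (k + (n + 1))
        = (1 + ε) ^ n * (tailSum a (k + n + 1) + ε * tailSum a (k + n + 1)) := by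
          rw [← add_assoc]; ring
      _ ≤ (1 + ε) ^ n * tailSum a (k + n) := by
          gcongr
          linarith [tailSum_eq_add hsum (k + n), hlac (k + n)]
      _ ≤ tailSum a k := ih

/-- Tails `≤ 2 r` lie in the single ball `B(r, r)`; the larger tails in `B(x, R)` are within a
factor `2 R / r` of each other, so geometric decay bounds their number. -/
lemma coverNum_closedBall_inter_decSet_le (hpos : ∀ n, 0 < a n) (hsum : Summable a) {ε : ℝ}
    (hε : 0 < ε) (hlac : ∀ j, ε * tailSum a (j + 1) ≤ a j) (x : ℝ) {r R : ℝ} (hr : 0 < r)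
    (hrR : r ≤ R) :
    (coverNum r (closedBall x R ∩ decSet a) : ℝ) ≤
      2 + Real.log (2 * (R / r)) / Real.log (1 + ε) := by
  classical
  have hex : ∃ k, tailSum a k ≤ 2 * r :=
    ((tendsto_tailSum a).eventually (eventually_le_nhds (by positivity))).exists
  set k₁ := Nat.find hex
  have hlarge : ∀ k < k₁, 2 * r < tailSum a k := fun k hk => not_le.mp (Nat.find_min hex hk)
  set K := (Finset.range k₁).filter fun k => tailSum a k ∈ closedBall x R
  have hsmall : ∀ z ∈ Icc 0 (2 * r), z ∈ closedBall r r := fun z hz => by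
    rw [Real.closedBall_eq_Icc]; constructor <;> linarith [hz.1, hz.2]
  have hcov :
      closedBall x R ∩ decSet a ⊆ ⋃ y ∈ insert r (K.image (tailSum a)), closedBall y r := by
    rintro z ⟨hzx, hz | ⟨k, rfl⟩⟩
    · rw [mem_singleton_iff.mp hz]
      exact mem_biUnion (Finset.mem_insert_self _ _) (hsmall 0 ⟨le_rfl, by positivity⟩)
    by_cases hk : k < k₁
    · have hkK : k ∈ K := Finset.mem_filter.mpr ⟨Finset.mem_range.mpr hk, hzx⟩
      exact mem_biUnion (Finset.mem_insert_of_mem (Finset.mem_image_of_mem _ hkK))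
        (mem_closedBall_self hr.le)
    · refine mem_biUnion (Finset.mem_insert_self _ _) (hsmall _ ⟨tailSum_nonneg hpos k, ?_⟩)
      exact (tailSum_antitone hpos hsum (not_lt.mp hk)).trans (Nat.find_spec hex)
  have ht : 1 ≤ R / r := (one_le_div hr).mpr hrR
  have hK : ∀ k ∈ K, ∀ k' ∈ K, tailSum a k ≤ 2 * (R / r) * tailSum a k' := by
    intro k hk k' hk'
    obtain ⟨-, hkx⟩ := Finset.mem_filter.mp hk
    obtain ⟨hk'₁, hk'x⟩ := Finset.mem_filter.mp hk'
    have h2r := hlarge k' (Finset.mem_range.mp hk'₁)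
    rw [mem_closedBall, Real.dist_eq, abs_le] at hkx hk'x
    have h2R : 2 * R ≤ R / r * tailSum a k' := by
      rw [div_mul_eq_mul_div, le_div_iff₀ hr]; nlinarith
    nlinarith
  have hcard := card_le_log_div_log_add_one (by linarith : 1 < 1 + ε)
    (pow_mul_tailSum_le hsum hε.le hlac) (tailSum_pos hpos hsum) (by linarith) hK
  calc (coverNum r (closedBall x R ∩ decSet a) : ℝ)
      ≤ (insert r (K.image (tailSum a))).card := by exact_mod_cast coverNum_le_card hcov
    _ ≤ K.card + 1 := by
      exact_mod_cast (Finset.card_insert_le _ _).trans (Nat.succ_le_succ Finset.card_image_le)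
    _ ≤ 2 + Real.log (2 * (R / r)) / Real.log (1 + ε) := by linarith

lemma mem_assouadExponents_decSet (hpos : ∀ n, 0 < a n) (hsum : Summable a) (hlac : IsLacunary a)
    {α : ℝ} (hα : 0 < α) : α ∈ assouadExponents (decSet a) := by
  obtain ⟨ε, hε, hlac⟩ := hlac
  set L := Real.log (1 + ε)
  have hL : 0 < L := Real.log_pos (by linarith)
  refine ⟨2 + (Real.log 2 + 1 / α) / L, by positivity, 1, one_pos, fun x _ r R hr hrR _ => ?_⟩
  set t := R / r
  have ht : 1 < t := (one_lt_div hr).mpr hrR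
  have htα : 1 ≤ t ^ α := Real.one_le_rpow ht.le hα.le
  have hlog : Real.log (2 * t) ≤ (Real.log 2 + 1 / α) * t ^ α := by
    rw [Real.log_mul two_ne_zero (by positivity), add_mul, one_div_mul_eq_div]
    nlinarith [Real.log_le_rpow_div (by positivity : 0 ≤ t) hα, Real.log_nonneg one_le_two]
  calc (coverNum r (closedBall x R ∩ decSet a) : ℝ) ≤ 2 + Real.log (2 * t) / L :=
        coverNum_closedBall_inter_decSet_le hpos hsum hε hlac x hr hrR.le
    _ ≤ 2 * t ^ α + (Real.log 2 + 1 / α) * t ^ α / L := by gcongr; linarith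
    _ = (2 + (Real.log 2 + 1 / α) / L) * t ^ α := by ring

end Lacunary

section NonLacunary

variable {a : ℕ → ℝ}

lemma exists_mem_decSet_dist_le (hpos : ∀ n, 0 < a n) (hdec : Antitone a) (hsum : Summable a)
    {j : ℕ} {z : ℝ} (hz : z ∈ Icc 0 (tailSum a (j + 1))) :
    ∃ p ∈ closedBall 0 (tailSum a (j + 1)) ∩ decSet a, dist z p ≤ a j := by
  rcases hz.1.eq_or_lt with rfl | hz₀
  · exact ⟨0, ⟨mem_closedBall_self (tailSum_nonneg hpos _), Or.inl rfl⟩,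
      by simp [(hpos j).le]⟩
  obtain ⟨k, hjk, hlt, hle⟩ := exists_succ_lt_le_of_tendsto_zero (tendsto_tailSum a) hz₀ hz.2
  have hTk : tailSum a k ≤ tailSum a (j + 1) := tailSum_antitone hpos hsum hjk
  refine ⟨tailSum a k, ⟨?_, Or.inr ⟨k, rfl⟩⟩, ?_⟩
  · rw [mem_closedBall, dist_zero_right, Real.norm_of_nonneg (tailSum_nonneg hpos k)]
    exact hTk
  · rw [Real.dist_eq, abs_sub_comm, abs_of_nonneg (by linarith)]
    linarith [tailSum_eq_add hsum k, hdec (show j ≤ k by omega)]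

lemma one_le_of_mem_assouadExponents_decSet (hpos : ∀ n, 0 < a n) (hdec : Antitone a)
    (hsum : Summable a) (hlac : ¬IsLacunary a) {α : ℝ}
    (hα : α ∈ assouadExponents (decSet a)) : 1 ≤ α := by
  obtain ⟨c, -, ρ, hρ, H⟩ := hα
  obtain ⟨J, hJ⟩ := ((tendsto_tailSum a).eventually (eventually_lt_nhds hρ)).exists
  refine le_of_frequently_rpow_le (C := 4 * c) (frequently_atTop.mpr fun t₀ => ?_)
  obtain ⟨j, hjJ, hj⟩ : ∃ j ≥ J, a j < (max t₀ 2)⁻¹ * tailSum a (j + 1) := by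
    by_contra! h
    exact hlac (IsLacunary.of_forall_ge hpos hsum J ⟨_, by positivity, h⟩)
  set R := tailSum a (j + 1)
  set r := a j
  have hr : 0 < r := hpos j
  have ht : max t₀ 2 < R / r := by
    rw [lt_div_iff₀ hr]
    exact (lt_inv_mul_iff₀ (by positivity : (0 : ℝ) < max t₀ 2)).mp hj
  have hrR : r < R := (one_lt_div hr).mp (by linarith [le_max_right t₀ 2])
  have hRρ : R < ρ := (tailSum_antitone hpos hsum (by omega : J ≤ j + 1)).trans_lt hJ
  have hlow : R - 0 ≤ coverNum r (closedBall 0 R ∩ decSet a) * (4 * r) :=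
    sub_le_coverNum_mul (isBounded_closedBall.subset inter_subset_left) hr
      fun z hz => exists_mem_decSet_dist_le hpos hdec hsum hz
  have hup := H 0 (Or.inl rfl) r R hr hrR hRρ
  refine ⟨R / r, by linarith [le_max_left t₀ 2], ?_⟩
  rw [Real.rpow_one, div_le_iff₀ hr]
  nlinarith

end NonLacunary

/-- the Assouad dimension of the decreasing complementary set
`D_a` is `0` or `1`, and it is `0` iff the sequence is lacunary, i.e. there is
`ε > 0` with `a j ≥ ε Σ_{i>j} a i` for all `j`. -/
theorem dimA_decSet_zero_or_one
    (a : ℕ → ℝ) (hpos : ∀ n, 0 < a n) (hdec : Antitone a) (hsum : Summable a) :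
    (dimA (decSet a) = 0 ∨ dimA (decSet a) = 1) ∧
    (dimA (decSet a) = 0 ↔
      ∃ ε : ℝ, 0 < ε ∧ ∀ j : ℕ, ε * (∑' i : ℕ, a (j + 1 + i)) ≤ a j) := by
  by_cases hlac : IsLacunary a
  · have h₀ : dimA (decSet a) = 0 := dimA_eq_zero_of_forall_pos_mem ⟨0, Or.inl rfl⟩
      fun α hα => mem_assouadExponents_decSet hpos hsum hlac hα
    exact ⟨Or.inl h₀, iff_of_true h₀ hlac⟩
  · have h₁ : dimA (decSet a) = 1 := dimA_eq_one_of_forall_one_le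
      fun α hα => one_le_of_mem_assouadExponents_decSet hpos hdec hsum hlac hα
    exact ⟨Or.inr h₁, iff_of_false (by rw [h₁]; exact one_ne_zero) hlac⟩
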